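/- arXiv:math/0012266 — 4 statements merged into one kernel-verified Lean document; each statement's English description precedes it below -/
import Mathlib

section
/- Every connected simple graph Γ with the property that for every vertex v the subgraph induced on the neighbours of v is isomorphic to the complete tripartite graph K_{3,3,3} (three parts of size 3) is isomorphic to the complete multipartite graph K_{3,3,3,3} (four parts of size 3). -/
/-!
Fix a vertex `v` and a neighbour `u₀` of it. Every link is complete multipartite and any two
vertices of a link have a common neighbour inside it. Walking through two successive links
and using transitivity of non-adjacency there, a non-neighbour of `v` that shares a neighbour
with `v` has the same neighbourhood as `v`; by connectivity this holds for every non-neighbour.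
So `G` is the join of the link `K_{3×3}` of `v` with the coclique of non-neighbours of `v`,
which is the part of `v` in the link of `u₀` and has three vertices: `G ≅ K_{4×3}`.
-/

open SimpleGraph

namespace SimpleGraph

variable {V : Type*} {G : SimpleGraph V}

def IsLocally {W : Type*} (G : SimpleGraph V) (H : SimpleGraph W) : Prop :=
  ∀ v, Nonempty (G.induce (G.neighborSet v) ≃g H)

lemma Adj.adj_of_neighborSet_eq {v a b : V} (ha : G.Adj v a)
    (h : G.neighborSet b = G.neighborSet v) : G.Adj a b :=
  (show a ∈ G.neighborSet b from h ▸ ha).symm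

def completeMultipartiteGraph.reindex {ι κ : Type*} (e : ι ≃ κ) (W : κ → Type*) :
    completeMultipartiteGraph (W ∘ e) ≃g completeMultipartiteGraph W where
  toEquiv := Equiv.sigmaCongrLeft e
  map_rel_iff' := by simp [Equiv.sigmaCongrLeft_apply]

lemma completeMultipartiteGraph.exists_adj_adj {ι : Type*} {W : ι → Type*}
    [∀ i, Nonempty (W i)] (hι : ∀ i j : ι, ∃ k, k ≠ i ∧ k ≠ j) (a b : Σ i, W i) :
    ∃ c, (completeMultipartiteGraph W).Adj a c ∧ (completeMultipartiteGraph W).Adj b c :=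
  let ⟨k, hka, hkb⟩ := hι a.1 b.1
  ⟨⟨k, Classical.arbitrary _⟩, hka.symm, hkb.symm⟩

namespace IsLocally

variable {W : Type*} {H : SimpleGraph W}

lemma isCompleteMultipartite_induce (hG : G.IsLocally H) (hH : H.IsCompleteMultipartite)
    (u : V) : (G.induce (G.neighborSet u)).IsCompleteMultipartite :=
  let ⟨φ⟩ := hG u
  hH.comap φ.toEmbedding

lemma exists_adj_adj (hG : G.IsLocally H) (hH : ∀ a b, ∃ c, H.Adj a c ∧ H.Adj b c)
    {u a b : V} (ha : G.Adj u a) (hb : G.Adj u b) :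
    ∃ w, G.Adj u w ∧ G.Adj a w ∧ G.Adj b w := by
  obtain ⟨φ⟩ := hG u
  obtain ⟨c, hac, hbc⟩ := hH (φ ⟨a, ha⟩) (φ ⟨b, hb⟩)
  refine ⟨φ.symm c, (φ.symm c).2, ?_, ?_⟩
  · simpa using φ.symm.map_adj_iff.2 hac
  · simpa using φ.symm.map_adj_iff.2 hbc

end IsLocally

section Twins

variable {v x u₀ : V}

lemma adj_of_adj_of_not_adj (hmp : ∀ u, (G.induce (G.neighborSet u)).IsCompleteMultipartite)
    {u a b c : V} (ha : G.Adj u a) (hb : G.Adj u b) (hc : G.Adj u c)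
    (hab : ¬G.Adj a b) (hca : G.Adj c a) : G.Adj c b := by
  by_contra hcb
  exact (hmp u).trans ⟨c, hc⟩ ⟨b, hb⟩ ⟨a, ha⟩ hcb (fun h ↦ hab h.symm) hca

lemma neighborSet_subset_of_not_adj_of_adj
    (hmp : ∀ u, (G.induce (G.neighborSet u)).IsCompleteMultipartite)
    (hcommon : ∀ {u a b}, G.Adj u a → G.Adj u b → ∃ w, G.Adj u w ∧ G.Adj a w ∧ G.Adj b w)
    (hvx : ¬G.Adj v x) (hv : G.Adj v u₀) (hx : G.Adj x u₀) :
    G.neighborSet v ⊆ G.neighborSet x := by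
  intro u hu
  obtain ⟨w, hvw, hu₀w, huw⟩ := hcommon hv hu
  have hwx : G.Adj w x := adj_of_adj_of_not_adj hmp hv.symm hx.symm hu₀w hvx hvw.symm
  exact (adj_of_adj_of_not_adj hmp hvw.symm hwx huw.symm hvx hu.symm).symm

lemma neighborSet_eq_of_not_adj_of_adj
    (hmp : ∀ u, (G.induce (G.neighborSet u)).IsCompleteMultipartite)
    (hcommon : ∀ {u a b}, G.Adj u a → G.Adj u b → ∃ w, G.Adj u w ∧ G.Adj a w ∧ G.Adj b w)
    (hvx : ¬G.Adj v x) (hv : G.Adj v u₀) (hx : G.Adj x u₀) :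
    G.neighborSet x = G.neighborSet v :=
  (neighborSet_subset_of_not_adj_of_adj hmp hcommon (fun h ↦ hvx h.symm) hx hv).antisymm
    (neighborSet_subset_of_not_adj_of_adj hmp hcommon hvx hv hx)

lemma Connected.neighborSet_eq_of_not_adj (hconn : G.Connected)
    (hmp : ∀ u, (G.induce (G.neighborSet u)).IsCompleteMultipartite)
    (hcommon : ∀ {u a b}, G.Adj u a → G.Adj u b → ∃ w, G.Adj u w ∧ G.Adj a w ∧ G.Adj b w)
    {w : V} (hvw : ¬G.Adj v w) : G.neighborSet w = G.neighborSet v := by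
  suffices ∀ w, G.Adj v w ∨ G.neighborSet w = G.neighborSet v from (this w).resolve_left hvw
  intro w
  induction (reachable_iff_reflTransGen v w).1 (hconn v w) with
  | refl => exact .inr rfl
  | @tail a b _ hab ih =>
    rcases ih with hva | ha
    · by_cases hvb : G.Adj v b
      · exact .inl hvb
      · exact .inr (neighborSet_eq_of_not_adj_of_adj hmp hcommon hvb hva hab.symm)
    · exact .inl (ha ▸ hab : b ∈ G.neighborSet v)

end Twins

def completeMultipartiteGraph.nonAdjEquiv {ι : Type*} {W : ι → Type*} (p : Σ i, W i) :
    {s // ¬(completeMultipartiteGraph W).Adj p s} ≃ W p.1 :=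
  (Equiv.subtypeEquivRight fun s ↦ by simp [eq_comm]).trans (Equiv.sigmaSubtype p.1)

noncomputable def nonAdjEquivOfAdj {ι : Type*} {W : ι → Type*} {v u₀ : V} (hv : G.Adj u₀ v)
    (φ : G.induce (G.neighborSet u₀) ≃g completeMultipartiteGraph W)
    (hu₀ : ∀ {w}, ¬G.Adj v w → G.Adj u₀ w) :
    {w // ¬G.Adj v w} ≃ W (φ ⟨v, hv⟩).1 :=
  (Equiv.subtypeSubtypeEquivSubtype hu₀).symm.trans <|
    (φ.toEquiv.subtypeEquiv fun t ↦ (φ.map_adj_iff (v := ⟨v, hv⟩) (w := t)).not.symm).trans <|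
      completeMultipartiteGraph.nonAdjEquiv _

noncomputable def isoOfLinkOfTwins {ι α : Type*} {v : V} [DecidablePred (· ∈ G.neighborSet v)]
    (φ : G.induce (G.neighborSet v) ≃g completeMultipartiteGraph fun _ : ι ↦ α)
    (e : {w // ¬G.Adj v w} ≃ α)
    (htwin : ∀ {w}, ¬G.Adj v w → G.neighborSet w = G.neighborSet v) :
    G ≃g completeMultipartiteGraph fun _ : Option ι ↦ α where
  toFun w :=
    if h : w ∈ G.neighborSet v then ⟨some (φ ⟨w, h⟩).1, (φ ⟨w, h⟩).2⟩ else ⟨none, e ⟨w, h⟩⟩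
  invFun
    | ⟨none, a⟩ => e.symm a
    | ⟨some i, a⟩ => φ.symm ⟨i, a⟩
  left_inv w := by by_cases h : G.Adj v w <;> simp [h]
  right_inv := by
    rintro ⟨_ | i, a⟩
    · exact (dif_neg (e.symm a).2).trans (congrArg _ (e.apply_symm_apply a))
    · simp
  map_rel_iff' {a b} := by
    by_cases ha : G.Adj v a <;> by_cases hb : G.Adj v b
    · simpa [ha, hb] using φ.map_adj_iff (v := ⟨a, ha⟩) (w := ⟨b, hb⟩)
    · simpa [ha, hb] using ha.adj_of_neighborSet_eq (htwin hb)
    · simpa [ha, hb] using (hb.adj_of_neighborSet_eq (htwin ha)).symm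
    · simpa [ha, hb] using fun hab ↦ hb (show b ∈ G.neighborSet v from htwin ha ▸ hab)

end SimpleGraph

/-- A connected simple graph which is locally the complete
tripartite graph `K_{3,3,3}` is isomorphic to the complete multipartite graph
`K_{3,3,3,3}`. -/
theorem stmt_0 {V : Type*} (G : SimpleGraph V) (hconn : G.Connected)
    (hloc : ∀ v : V,
      Nonempty ((G.induce (G.neighborSet v)) ≃g
        completeMultipartiteGraph (fun _ : Fin 3 => Fin 3))) :
    Nonempty (G ≃g completeMultipartiteGraph (fun _ : Fin 4 => Fin 3)) := by
  classical
  have hK : G.IsLocally (completeMultipartiteGraph fun _ : Fin 3 ↦ Fin 3) := hloc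
  have hmp := hK.isCompleteMultipartite_induce (completeMultipartiteGraph.isCompleteMultipartite _)
  obtain ⟨v⟩ := hconn.nonempty
  obtain ⟨φ⟩ := hloc v
  have hu₀ : G.Adj v (φ.symm ⟨0, 0⟩) := (φ.symm ⟨0, 0⟩).2
  obtain ⟨ψ⟩ := hloc (φ.symm ⟨0, 0⟩)
  have htwin {w} : ¬G.Adj v w → G.neighborSet w = G.neighborSet v :=
    hconn.neighborSet_eq_of_not_adj hmp
      (hK.exists_adj_adj (completeMultipartiteGraph.exists_adj_adj (by decide)))
  let e := nonAdjEquivOfAdj hu₀.symm ψ fun hw ↦ hu₀.adj_of_neighborSet_eq (htwin hw)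
  exact ⟨(isoOfLinkOfTwins φ e htwin).trans
    (completeMultipartiteGraph.reindex (finSuccEquiv 3).symm fun _ ↦ Fin 3)⟩
end

section
/- Let V = Fin 7 → ZMod 2, let q : V → ZMod 2 be the quadratic form q(x) = x₀x₁ + x₂x₃ + x₄x₅ + x₆, and let e₆ denote the last standard basis vector. Consider the simple graph Γ on the 128 vectors of V in which distinct x, y are adjacent if and only if q(x+y) = 0. Then: (i) every vertex has exactly 63 neighbours; (ii) any two adjacent vertices have exactly 30 common neighbours; (iii) for every x, the vertices x and x + e₆ are non-adjacent and have no common neighbour; (iv) any two distinct non-adjacent vertices x, y with y ≠ x + e₆ have exactly 32 common neighbours. In particular Γ is a 2-fold antipodal cover of the complete graph on 64 vertices, with x + e₆ the unique vertex at distance 3 from x. -/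
/-- The quadratic form `q(x) = x₀x₁ + x₂x₃ + x₄x₅ + x₆` on `GF(2)^7`. -/
def q7 (x : Fin 7 → ZMod 2) : ZMod 2 :=
  x 0 * x 1 + x 2 * x 3 + x 4 * x 5 + x 6

/-- The last standard basis vector `e₆` of `GF(2)^7`. -/
def e6 : Fin 7 → ZMod 2 := Pi.single 6 1

/-- The graph on the 128 vectors of `GF(2)^7` in which distinct `x`, `y` are
adjacent iff `q(x+y) = 0`. -/
def coverGraph : SimpleGraph (Fin 7 → ZMod 2) where
  Adj x y := x ≠ y ∧ q7 (x + y) = 0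
  symm := by
    constructor
    rintro x y ⟨h1, h2⟩
    exact ⟨h1.symm, by rwa [add_comm]⟩
  loopless := by constructor; rintro x ⟨h, -⟩; exact h rfl

instance : DecidableRel coverGraph.Adj :=
  fun x y => inferInstanceAs (Decidable (x ≠ y ∧ q7 (x + y) = 0))

/-!
Translations `z ↦ z + d` are automorphisms of the graph, since in characteristic 2
`q((x + d) + (y + d)) = q(x + y)`; so every count reduces to the base vertex `0`, whose neighbours
are the 63 nonzero singular vectors of `q`, and the counts at `0` are finite checks.
The vector `e₆` spans the radical of the polar form of `q` and `q(e₆) = 1`, so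
`q(z + e₆) = q(z) + 1`: no `z` is adjacent to both `0` and `e₆`, which are therefore at distance 3,
while every other non-neighbour of `0` shares 32 neighbours with it.
-/

namespace SimpleGraph

section Iso

variable {V W : Type*} {G : SimpleGraph V} {G' : SimpleGraph W}

theorem Hom.edist_le (f : G →g G') (u v : V) : G'.edist (f u) (f v) ≤ G.edist u v := by
  by_cases hr : G.Reachable u v
  · obtain ⟨p, hp⟩ := hr.exists_walk_length_eq_edist
    rw [← hp, ← p.length_map f]
    exact (p.map f).edist_le
  · rw [edist_eq_top_of_not_reachable hr]
    exact le_top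

theorem Iso.edist_eq (f : G ≃g G') (u v : V) : G'.edist (f u) (f v) = G.edist u v := by
  refine le_antisymm (Hom.edist_le f.toHom u v) ?_
  simpa using Hom.edist_le f.symm.toHom (f u) (f v)

def Iso.mapCommonNeighbors (f : G ≃g G') (u v : V) :
    G.commonNeighbors u v ≃ G'.commonNeighbors (f u) (f v) :=
  f.toEquiv.subtypeEquiv fun _ => (and_congr f.map_adj_iff f.map_adj_iff).symm

end Iso

section Translation

variable {A : Type*} [AddGroup A] {G : SimpleGraph A}

@[simps!]
def addRightIso (hG : ∀ u v d : A, G.Adj (u + d) (v + d) ↔ G.Adj u v) (d : A) : G ≃g G where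
  toEquiv := Equiv.addRight d
  map_rel_iff' := hG _ _ d

theorem adj_iff_adj_zero_sub (hG : ∀ u v d : A, G.Adj (u + d) (v + d) ↔ G.Adj u v) (x y : A) :
    G.Adj x y ↔ G.Adj 0 (y - x) := by
  simpa [sub_eq_add_neg] using (hG x y (-x)).symm

theorem edist_eq_edist_zero_sub (hG : ∀ u v d : A, G.Adj (u + d) (v + d) ↔ G.Adj u v)
    (x y : A) : G.edist x y = G.edist 0 (y - x) := by
  simpa [← sub_eq_add_neg] using ((addRightIso hG (-x)).edist_eq x y).symm

variable [Fintype A] [DecidableRel G.Adj]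

theorem degree_eq_degree_zero (hG : ∀ u v d : A, G.Adj (u + d) (v + d) ↔ G.Adj u v) (x : A) :
    G.degree x = G.degree 0 := by
  have h := (addRightIso hG (-x)).degree_eq x
  rwa [addRightIso_apply, add_neg_cancel, eq_comm] at h

theorem card_commonNeighbors_eq_card_commonNeighbors_zero_sub
    (hG : ∀ u v d : A, G.Adj (u + d) (v + d) ↔ G.Adj u v) (x y : A) :
    Fintype.card (G.commonNeighbors x y) = Fintype.card (G.commonNeighbors 0 (y - x)) :=
  Fintype.card_congr <| ((addRightIso hG (-x)).mapCommonNeighbors x y).trans <|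
    .setCongr <| by simp [sub_eq_add_neg]

end Translation

end SimpleGraph

open SimpleGraph

theorem coverGraph_adj_add_right (u v d : Fin 7 → ZMod 2) :
    coverGraph.Adj (u + d) (v + d) ↔ coverGraph.Adj u v := by
  have h : u + d + (v + d) = u + v := by
    rw [add_add_add_comm, CharTwo.add_self_eq_zero, add_zero]
  simp only [coverGraph, ne_eq, add_left_inj, h]

set_option maxRecDepth 40000

theorem coverGraph_degree_zero : coverGraph.degree 0 = 63 := by decide

theorem coverGraph_card_commonNeighbors_zero_of_adj :
    ∀ d, coverGraph.Adj 0 d → Fintype.card (coverGraph.commonNeighbors 0 d) = 30 := by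
  decide

theorem coverGraph_card_commonNeighbors_zero_of_not_adj :
    ∀ d, d ≠ 0 → ¬ coverGraph.Adj 0 d → d ≠ e6 →
      Fintype.card (coverGraph.commonNeighbors 0 d) = 32 := by
  decide

theorem coverGraph_commonNeighbors_zero_e6 : coverGraph.commonNeighbors 0 e6 = ∅ :=
  Set.eq_empty_iff_forall_notMem.2 (by decide)

theorem coverGraph_edist_zero_e6 : coverGraph.edist 0 e6 = 3 := by
  refine le_antisymm ?_ ?_
  · have h₁ : coverGraph.Adj 0 ![1, 0, 0, 0, 0, 0, 0] := by decide
    have h₂ : coverGraph.Adj ![1, 0, 0, 0, 0, 0, 0] ![0, 1, 0, 0, 0, 0, 1] := by decide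
    have h₃ : coverGraph.Adj ![0, 1, 0, 0, 0, 0, 1] e6 := by decide
    simpa using (Walk.cons h₁ <| .cons h₂ <| .cons h₃ .nil).edist_le
  · exact Order.add_one_le_of_lt <| two_lt_edist_iff.2
      ⟨by decide, by decide, coverGraph_commonNeighbors_zero_e6⟩

theorem coverGraph_card_commonNeighbors_of_adj {x y : Fin 7 → ZMod 2}
    (h : coverGraph.Adj x y) : Fintype.card (coverGraph.commonNeighbors x y) = 30 := by
  rw [card_commonNeighbors_eq_card_commonNeighbors_zero_sub coverGraph_adj_add_right]
  exact coverGraph_card_commonNeighbors_zero_of_adj _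
    ((adj_iff_adj_zero_sub coverGraph_adj_add_right x y).1 h)

theorem coverGraph_card_commonNeighbors_of_not_adj {x y : Fin 7 → ZMod 2} (hne : x ≠ y)
    (hadj : ¬ coverGraph.Adj x y) (he : y ≠ x + e6) :
    Fintype.card (coverGraph.commonNeighbors x y) = 32 := by
  rw [card_commonNeighbors_eq_card_commonNeighbors_zero_sub coverGraph_adj_add_right]
  exact coverGraph_card_commonNeighbors_zero_of_not_adj _ (sub_ne_zero.2 hne.symm)
    ((adj_iff_adj_zero_sub coverGraph_adj_add_right x y).not.1 hadj) (mt sub_eq_iff_eq_add'.1 he)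

theorem coverGraph_edist_add_e6 (x : Fin 7 → ZMod 2) : coverGraph.edist x (x + e6) = 3 := by
  rw [edist_eq_edist_zero_sub coverGraph_adj_add_right, add_sub_cancel_left,
    coverGraph_edist_zero_e6]

theorem coverGraph_dist_eq_three_iff (x y : Fin 7 → ZMod 2) :
    coverGraph.dist x y = 3 ↔ y = x + e6 := by
  refine ⟨fun h => ?_, ?_⟩
  · have hedist : coverGraph.edist x y = 3 := by
      rw [← (Reachable.of_dist_ne_zero (by omega)).coe_dist_eq_edist, h]; rfl
    obtain ⟨hne, hadj, hempty⟩ := two_lt_edist_iff.1 (by rw [hedist]; decide)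
    by_contra he
    have := coverGraph_card_commonNeighbors_of_not_adj hne hadj he
    simp [hempty] at this
  · rintro rfl
    simp [SimpleGraph.dist, coverGraph_edist_add_e6]

/-- In the graph on `GF(2)^7` with distinct `x`, `y` adjacent
iff `q(x+y) = 0`: (i) every vertex has exactly 63 neighbours; (ii) adjacent
vertices have exactly 30 common neighbours; (iii) `x` and `x + e₆` are
non-adjacent with no common neighbour; (iv) distinct non-adjacent vertices
`x`, `y` with `y ≠ x + e₆` have exactly 32 common neighbours; and `x + e₆` is
the unique vertex at distance 3 from `x`. -/
theorem stmt_6 :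
    (∀ x, coverGraph.degree x = 63) ∧
    (∀ x y, coverGraph.Adj x y →
      Fintype.card (coverGraph.commonNeighbors x y) = 30) ∧
    (∀ x, ¬ coverGraph.Adj x (x + e6) ∧
      coverGraph.commonNeighbors x (x + e6) = ∅) ∧
    (∀ x y, x ≠ y → ¬ coverGraph.Adj x y → y ≠ x + e6 →
      Fintype.card (coverGraph.commonNeighbors x y) = 32) ∧
    (∀ x y, coverGraph.dist x y = 3 ↔ y = x + e6) := by
  refine ⟨fun x => ?_, fun _ _ => coverGraph_card_commonNeighbors_of_adj, fun x => ?_,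
    fun _ _ => coverGraph_card_commonNeighbors_of_not_adj, coverGraph_dist_eq_three_iff⟩
  · rw [degree_eq_degree_zero coverGraph_adj_add_right, coverGraph_degree_zero]
  · obtain ⟨-, hadj, hempty⟩ := two_lt_edist_iff.1
      (show 2 < coverGraph.edist x (x + e6) by rw [coverGraph_edist_add_e6]; decide)
    exact ⟨hadj, hempty⟩
end

section
/- Let V = Fin 8 → ZMod 2 and let Q : V → ZMod 2 be any quadratic form (Q(0) = 0 and Q(x+y) = Q(x) + Q(y) + B(x,y) for a bilinear B) whose polar form B is nondegenerate. Then the simple graph whose vertices are the nonsingular vectors {v : Q(v) = 1}, with distinct u, v adjacent if and only if B(u,v) = 0, is locally the Sp_6(2) polar graph: for every vertex u the subgraph induced on the neighbours of u is isomorphic to the graph whose vertices are the nonzero vectors of Fin 6 → ZMod 2 with the standard nondegenerate alternating form B'(x,y) = Σ_{i=0}^{2}(x_{2i}·y_{2i+1} + x_{2i+1}·y_{2i}), two distinct vectors being adjacent if and only if B' vanishes on them. -/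
/-- The polar form `B(x,y) = Q(x+y) + Q(x) + Q(y)` of a quadratic form `Q`. -/
def polarForm (Q : (Fin 8 → ZMod 2) → ZMod 2) (x y : Fin 8 → ZMod 2) : ZMod 2 :=
  Q (x + y) + Q x + Q y

lemma polarForm_comm (Q : (Fin 8 → ZMod 2) → ZMod 2) (x y : Fin 8 → ZMod 2) :
    polarForm Q x y = polarForm Q y x := by
  unfold polarForm; rw [add_comm x y]; ring

/-- The graph on the nonsingular vectors of a quadratic form `Q` on `GF(2)^8`:
distinct `u`, `v` with `Q(u) = Q(v) = 1` are adjacent iff `B(u,v) = 0`, where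
`B` is the polar form of `Q`. -/
def nonsingularGraph (Q : (Fin 8 → ZMod 2) → ZMod 2) :
    SimpleGraph {v : Fin 8 → ZMod 2 // Q v = 1} where
  Adj u v := u ≠ v ∧ polarForm Q u.1 v.1 = 0
  symm := by
    constructor
    rintro u v ⟨h1, h2⟩
    exact ⟨h1.symm, by rw [polarForm_comm]; exact h2⟩
  loopless := by constructor; rintro u ⟨h, -⟩; exact h rfl

/-- The standard nondegenerate alternating bilinear form
`B'(x,y) = Σ_{i=0}^{2} (x_{2i}·y_{2i+1} + x_{2i+1}·y_{2i})` on `GF(2)^6`. -/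
def sp6Form (x y : Fin 6 → ZMod 2) : ZMod 2 :=
  ∑ i : Fin 3,
    (x ⟨2 * i.1, by have := i.2; omega⟩ * y ⟨2 * i.1 + 1, by have := i.2; omega⟩ +
     x ⟨2 * i.1 + 1, by have := i.2; omega⟩ * y ⟨2 * i.1, by have := i.2; omega⟩)

lemma sp6Form_comm (x y : Fin 6 → ZMod 2) : sp6Form x y = sp6Form y x :=
  Finset.sum_congr rfl fun i _ => by ring

/-- The `Sp_6(2)` polar graph: nonzero vectors of `GF(2)^6`, distinct `u`, `v`
adjacent iff `B'(u,v) = 0`. -/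
def sp6PolarGraph : SimpleGraph {v : Fin 6 → ZMod 2 // v ≠ 0} where
  Adj u v := u ≠ v ∧ sp6Form u.1 v.1 = 0
  symm := by
    constructor
    rintro u v ⟨h1, h2⟩
    exact ⟨h1.symm, by rw [sp6Form_comm]; exact h2⟩
  loopless := by constructor; rintro u ⟨h, -⟩; exact h rfl

/-!
The polar form `B` of `Q` is alternating, so `u ∈ u^⊥`, and for `x ∈ u^⊥` we have
`Q (x + u) = Q x + 1`: every coset `{x, x + u} ≠ {0, u}` of `⟨u⟩` in `u^⊥` contains exactly one
nonsingular vector, and two such vectors are adjacent iff their cosets are orthogonal. Extending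
the hyperbolic pair `(u, y)` (with `B u y = 1`) to a symplectic basis
`u, y, e₁, f₁, e₂, f₂, e₃, f₃` of `V`, the cosets are represented by `span (eᵢ, fᵢ)`, on which
`B` is the form `B'` of `GF(2)^6`.
-/

section PairCombination

variable {R V ι : Type*} [Semiring R] [AddCommMonoid V] [Module R V]

variable (R) in
def finPairsLinearEquiv (n : ℕ) : (Fin (2 * n) → R) ≃ₗ[R] (Fin n → R × R) where
  toFun c i := (c ⟨2 * i, by omega⟩, c ⟨2 * i + 1, by omega⟩)
  invFun c k := if k.val % 2 = 0 then (c ⟨k / 2, by omega⟩).1 else (c ⟨k / 2, by omega⟩).2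
  map_add' _ _ := rfl
  map_smul' _ _ := rfl
  left_inv c := by
    funext k
    dsimp only
    split_ifs <;> congr 1 <;> ext <;> dsimp only <;> omega
  right_inv c := by
    funext i
    simp [Nat.mul_add_div]

@[simp]
theorem finPairsLinearEquiv_apply {n : ℕ} (c : Fin (2 * n) → R)
    (i : Fin n) : finPairsLinearEquiv R n c i = (c ⟨2 * i, by omega⟩, c ⟨2 * i + 1, by omega⟩) :=
  rfl

variable (R) in
def pairCombination [Fintype ι] (p : ι → V × V) : (ι → R × R) →ₗ[R] V where
  toFun c := ∑ i, ((c i).1 • (p i).1 + (c i).2 • (p i).2)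
  map_add' c d := by
    simp only [Pi.add_apply, Prod.fst_add, Prod.snd_add, add_smul, ← Finset.sum_add_distrib]
    exact Finset.sum_congr rfl fun _ _ => by abel
  map_smul' a c := by
    simp only [Pi.smul_apply, Prod.smul_fst, Prod.smul_snd, smul_eq_mul, mul_smul,
      ← smul_add, Finset.smul_sum, RingHom.id_apply]

theorem pairCombination_apply [Fintype ι] (p : ι → V × V) (c : ι → R × R) :
    pairCombination R p c = ∑ i, ((c i).1 • (p i).1 + (c i).2 • (p i).2) := rfl

theorem pairCombination_cons {n : ℕ} (p : Fin (n + 1) → V × V) (a : R × R) (c : Fin n → R × R) :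
    pairCombination R p (Fin.cons a c) =
      a.1 • (p 0).1 + a.2 • (p 0).2 + pairCombination R (Fin.tail p) c := by
  simp [pairCombination_apply, Fin.sum_univ_succ, Fin.tail]

end PairCombination

namespace LinearMap.BilinForm

variable {K V ι : Type*} [Field K] [AddCommGroup V] [Module K V]

variable (B : LinearMap.BilinForm K V)

theorem apply_pairCombination [Fintype ι] (p : ι → V × V) (x : V) (c : ι → K × K) :
    B x (pairCombination K p c) = ∑ i, ((c i).1 * B x (p i).1 + (c i).2 * B x (p i).2) := by
  simp [pairCombination_apply]

def IsSymplecticFamily [DecidableEq ι] (p : ι → V × V) : Prop :=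
  ∀ i j, B (p i).1 (p j).1 = 0 ∧ B (p i).2 (p j).2 = 0 ∧
    B (p i).1 (p j).2 = if i = j then 1 else 0

variable {B}

theorem exists_apply_eq_one (hB : B.SeparatingLeft) {x : V} (hx : x ≠ 0) : ∃ y, B x y = 1 := by
  obtain ⟨z, hz⟩ : ∃ z, B x z ≠ 0 := by
    by_contra! h
    exact hx (hB x h)
  exact ⟨(B x z)⁻¹ • z, by simp [hz]⟩

namespace IsSymplecticFamily

variable [DecidableEq ι] {p : ι → V × V}

theorem apply_fst_pairCombination [Fintype ι] (hp : IsSymplecticFamily B p) (c : ι → K × K)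
    (j : ι) : B (p j).1 (pairCombination K p c) = (c j).2 := by
  simp [apply_pairCombination, (hp j _).1, (hp j _).2.2]

theorem apply_snd_pairCombination [Fintype ι] (hB : B.IsAlt) (hp : IsSymplecticFamily B p)
    (c : ι → K × K) (j : ι) : B (p j).2 (pairCombination K p c) = -(c j).1 := by
  have hsnd_fst : ∀ i, B (p j).2 (p i).1 = -if i = j then 1 else 0 := fun i => by
    rw [← hB.neg_eq, (hp i j).2.2]
  simp [apply_pairCombination, hsnd_fst, (hp j _).2.1]

theorem pairCombination_apply_pairCombination [Fintype ι] (hB : B.IsAlt)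
    (hp : IsSymplecticFamily B p) (c d : ι → K × K) :
    B (pairCombination K p c) (pairCombination K p d) =
      ∑ i, ((c i).1 * (d i).2 - (c i).2 * (d i).1) := by
  rw [apply_pairCombination]
  refine Finset.sum_congr rfl fun i _ => ?_
  rw [← hB.neg_eq (p i).1, ← hB.neg_eq (p i).2, hp.apply_fst_pairCombination,
    hp.apply_snd_pairCombination hB]
  ring

theorem pairCombination_injective [Fintype ι] (hB : B.IsAlt) (hp : IsSymplecticFamily B p) :
    Function.Injective (pairCombination K p) := by
  refine (injective_iff_map_eq_zero _).2 fun c hc => funext fun j => Prod.ext ?_ ?_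
  · simpa [hc] using (hp.apply_snd_pairCombination hB c j).symm
  · simpa [hc] using (hp.apply_fst_pairCombination c j).symm

theorem pairCombination_bijective [Fintype ι] [FiniteDimensional K V] (hB : B.IsAlt)
    (hp : IsSymplecticFamily B p) (hdim : Module.finrank K V = 2 * Fintype.card ι) :
    Function.Bijective (pairCombination K p) := by
  have hinj := hp.pairCombination_injective hB
  refine ⟨hinj, (LinearMap.injective_iff_surjective_of_finrank_eq_finrank ?_).1 hinj⟩
  simp [Module.finrank_pi_fintype, hdim, mul_comm]

theorem exists_orthogonal_pair [Fintype ι] [FiniteDimensional K V] (hB : B.IsAlt)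
    (hnd : B.SeparatingLeft) (hp : IsSymplecticFamily B p)
    (hdim : 2 * Fintype.card ι < Module.finrank K V) :
    ∃ e f, B e f = 1 ∧
      ∀ i, B (p i).1 e = 0 ∧ B (p i).2 e = 0 ∧ B (p i).1 f = 0 ∧ B (p i).2 f = 0 := by
  let φ : V →ₗ[K] (ι → K × K) := LinearMap.pi fun i => (B (p i).1).prod (B (p i).2)
  obtain ⟨e, he, he0⟩ := Submodule.exists_mem_ne_zero_of_ne_bot
    (LinearMap.ker_ne_bot_of_finrank_lt (f := φ)
      (by simpa [Module.finrank_pi_fintype, mul_comm] using hdim))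
  have hpe : ∀ i, B (p i).1 e = 0 ∧ B (p i).2 e = 0 := fun i => by
    simpa [φ, Prod.ext_iff] using congrFun (show φ e = 0 from he) i
  obtain ⟨z, hz⟩ := exists_apply_eq_one hnd he0
  -- subtract from `z` its components along the pairs of `p`
  let c : ι → K × K := fun i => (-B (p i).2 z, B (p i).1 z)
  refine ⟨e, z - pairCombination K p c, ?_, fun i => ⟨(hpe i).1, (hpe i).2, ?_, ?_⟩⟩
  · simp [apply_pairCombination, hz, hB.eq_iff.1 (hpe _).1, hB.eq_iff.1 (hpe _).2]
  · simp [hp.apply_fst_pairCombination, c]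
  · simp [hp.apply_snd_pairCombination hB, c]

theorem snoc {n : ℕ} {p : Fin n → V × V} (hB : B.IsAlt) (hp : IsSymplecticFamily B p) {e f : V}
    (hef : B e f = 1)
    (horth : ∀ i, B (p i).1 e = 0 ∧ B (p i).2 e = 0 ∧ B (p i).1 f = 0 ∧ B (p i).2 f = 0) :
    IsSymplecticFamily B (Fin.snoc p (e, f) : Fin (n + 1) → V × V) := by
  intro i j
  induction i using Fin.lastCases with
  | last =>
    induction j using Fin.lastCases with
    | last => simp [hB.self_eq_zero, hef]
    | cast j =>
      simp [hB.eq_iff.1 (horth j).1, hB.eq_iff.1 (horth j).2.2.2, hB.eq_iff.1 (horth j).2.1,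
        (Fin.castSucc_ne_last j).symm]
  | cast i =>
    induction j using Fin.lastCases with
    | last => simp [(horth i).1, (horth i).2.2.2, (horth i).2.2.1, Fin.castSucc_ne_last]
    | cast j => simpa using hp i j

section Tail

variable {n : ℕ} {p : Fin (n + 1) → V × V}

theorem tail (hp : IsSymplecticFamily B p) : IsSymplecticFamily B (Fin.tail p) := fun i j => by
  simpa [Fin.tail] using hp i.succ j.succ

theorem apply_fst_zero_pairCombination_tail (hp : IsSymplecticFamily B p) (c : Fin n → K × K) :
    B (p 0).1 (pairCombination K (Fin.tail p) c) = 0 := by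
  simpa [pairCombination_cons] using hp.apply_fst_pairCombination (Fin.cons 0 c) 0

theorem eq_zero_of_smul_add_pairCombination_tail_eq_zero (hB : B.IsAlt)
    (hp : IsSymplecticFamily B p) {a : K} {c : Fin n → K × K}
    (h : a • (p 0).1 + pairCombination K (Fin.tail p) c = 0) : c = 0 := by
  have : Fin.cons ((a, 0) : K × K) c = 0 :=
    hp.pairCombination_injective hB (by simpa [pairCombination_cons] using h)
  funext i
  simpa using congrFun this i.succ

theorem exists_smul_add_pairCombination_tail_eq [FiniteDimensional K V] (hB : B.IsAlt)
    (hp : IsSymplecticFamily B p) (hdim : Module.finrank K V = 2 * (n + 1)) {x : V}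
    (hx : B (p 0).1 x = 0) :
    ∃ (a : K) (c : Fin n → K × K), a • (p 0).1 + pairCombination K (Fin.tail p) c = x := by
  obtain ⟨c, rfl⟩ := (hp.pairCombination_bijective hB (by simpa using hdim)).2 x
  have hc0 : (c 0).2 = 0 := by rwa [hp.apply_fst_pairCombination] at hx
  refine ⟨(c 0).1, Fin.tail c, ?_⟩
  conv_rhs => rw [← Fin.cons_self_tail c, pairCombination_cons]
  simp [hc0]

end Tail

end IsSymplecticFamily

theorem exists_isSymplecticFamily_fin_succ [FiniteDimensional K V] (hB : B.IsAlt)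
    (hnd : B.SeparatingLeft) (q : V × V) (hq : B q.1 q.2 = 1) :
    ∀ n, 2 * (n + 1) ≤ Module.finrank K V →
      ∃ p : Fin (n + 1) → V × V, IsSymplecticFamily B p ∧ p 0 = q
  | 0, _ => ⟨fun _ => q, fun i j => by
      simp [hB.self_eq_zero, hq, Subsingleton.elim (α := Fin 1) i j], rfl⟩
  | n + 1, hn => by
    obtain ⟨p, hp, hp0⟩ := exists_isSymplecticFamily_fin_succ hB hnd q hq n (by omega)
    obtain ⟨e, f, hef, horth⟩ := hp.exists_orthogonal_pair hB hnd (by rw [Fintype.card_fin]; omega)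
    exact ⟨_, hp.snoc hB hef horth, by simpa using hp0⟩

end LinearMap.BilinForm

open LinearMap.BilinForm

theorem sp6Form_eq_sum (c d : Fin 6 → ZMod 2) :
    sp6Form c d = ∑ i, ((finPairsLinearEquiv (ZMod 2) 3 c i).1 * (finPairsLinearEquiv _ 3 d i).2 -
      (finPairsLinearEquiv (ZMod 2) 3 c i).2 * (finPairsLinearEquiv _ 3 d i).1) := by
  simp only [sp6Form, finPairsLinearEquiv_apply, CharTwo.sub_eq_add]

section QuadraticForm

variable {Q : (Fin 8 → ZMod 2) → ZMod 2}

def polarBilin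
    (hbil : ∀ x y z : Fin 8 → ZMod 2, polarForm Q (x + y) z = polarForm Q x z + polarForm Q y z) :
    LinearMap.BilinForm (ZMod 2) (Fin 8 → ZMod 2) :=
  have smul_left (a : ZMod 2) (x y : Fin 8 → ZMod 2) :
      polarForm Q (a • x) y = a • polarForm Q x y :=
    ZMod.map_smul (AddMonoidHom.mk' (polarForm Q · y) fun x x' => hbil x x' y) a x
  LinearMap.mk₂ (ZMod 2) (polarForm Q) hbil smul_left
    (fun x y z => by rw [polarForm_comm, hbil, polarForm_comm, polarForm_comm Q z])
    (fun a x y => by rw [polarForm_comm, smul_left, polarForm_comm])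

variable (hQ0 : Q 0 = 0)
  (hbil : ∀ x y z : Fin 8 → ZMod 2, polarForm Q (x + y) z = polarForm Q x z + polarForm Q y z)

theorem polarBilin_apply (x y : Fin 8 → ZMod 2) : polarBilin hbil x y = polarForm Q x y := rfl

include hQ0 in
theorem isAlt_polarBilin : (polarBilin hbil).IsAlt := fun x => by
  have hxx : x + x = 0 := by rw [← two_smul (ZMod 2), show (2 : ZMod 2) = 0 from rfl, zero_smul]
  rw [polarBilin_apply, polarForm, hxx, hQ0, zero_add, CharTwo.add_self_eq_zero]

theorem apply_smul_add_of_polarForm_eq_zero {u x : Fin 8 → ZMod 2} (hu : Q u = 1)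
    (hux : polarForm Q u x = 0) (a : ZMod 2) : Q (a • u + x) = a + Q x := by
  rcases (by decide : ∀ b : ZMod 2, b = 0 ∨ b = 1) a with rfl | rfl
  · simp
  · rw [polarForm] at hux
    rw [one_smul]
    linear_combination (norm := ring_nf) hux - hu
    reduce_mod_char

include hQ0 hbil in
theorem polarForm_smul_add_smul_add {u x y : Fin 8 → ZMod 2} (hux : polarForm Q u x = 0)
    (huy : polarForm Q u y = 0) (a b : ZMod 2) :
    polarForm Q (a • u + x) (b • u + y) = polarForm Q x y := by
  have hB := isAlt_polarBilin hQ0 hbil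
  simp only [← polarBilin_apply hbil] at hux huy ⊢
  simp [huy, hB.self_eq_zero, hB.eq_iff.1 hux]

variable (Q) in
/-- The nonsingular one of `L c` and `L c + u`, when `Q u = 1` and `u ⟂ L c`. -/
def nonsingularLift (u : Fin 8 → ZMod 2)
    (L : (Fin 6 → ZMod 2) →ₗ[ZMod 2] (Fin 8 → ZMod 2)) (c : Fin 6 → ZMod 2) : Fin 8 → ZMod 2 :=
  (1 + Q (L c)) • u + L c

section NonsingularLift

variable {u : Fin 8 → ZMod 2} {L : (Fin 6 → ZMod 2) →ₗ[ZMod 2] (Fin 8 → ZMod 2)}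

include hQ0 in
theorem nonsingularLift_zero : nonsingularLift Q u L 0 = u := by
  simp [nonsingularLift, hQ0]

theorem nonsingularLift_injective (hind : ∀ (a : ZMod 2) c, a • u + L c = 0 → c = 0) :
    Function.Injective (nonsingularLift Q u L) := fun c d h => by
  refine sub_eq_zero.1 (hind (Q (L c) - Q (L d)) _ ?_)
  rw [map_sub, ← sub_eq_zero.2 h]
  simp only [nonsingularLift]
  module

variable (hLu : ∀ c, polarForm Q u (L c) = 0)
include hLu

theorem apply_nonsingularLift (hu : Q u = 1) (c : Fin 6 → ZMod 2) :
    Q (nonsingularLift Q u L c) = 1 := by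
  rw [nonsingularLift, apply_smul_add_of_polarForm_eq_zero hu (hLu c), add_assoc,
    CharTwo.add_self_eq_zero, add_zero]

include hQ0 hbil in
theorem polarForm_nonsingularLift_right (c : Fin 6 → ZMod 2) :
    polarForm Q u (nonsingularLift Q u L c) = 0 := by
  have hB := isAlt_polarBilin hQ0 hbil
  simp only [← polarBilin_apply hbil] at hLu ⊢
  simp [nonsingularLift, hB.self_eq_zero, hLu]

include hQ0 hbil in
theorem polarForm_nonsingularLift (c d : Fin 6 → ZMod 2) :
    polarForm Q (nonsingularLift Q u L c) (nonsingularLift Q u L d) = polarForm Q (L c) (L d) :=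
  polarForm_smul_add_smul_add hQ0 hbil (hLu c) (hLu d) _ _

theorem exists_nonsingularLift_eq (hu : Q u = 1)
    (hspan : ∀ x, polarForm Q u x = 0 → ∃ (a : ZMod 2) (c : Fin 6 → ZMod 2), a • u + L c = x)
    {v : Fin 8 → ZMod 2} (hv : Q v = 1) (huv : polarForm Q u v = 0) :
    ∃ c, nonsingularLift Q u L c = v := by
  obtain ⟨a, c, rfl⟩ := hspan v huv
  have ha : 1 + Q (L c) = a := by
    rw [← hv, apply_smul_add_of_polarForm_eq_zero hu (hLu c), add_assoc,
      CharTwo.add_self_eq_zero, add_zero]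
  exact ⟨c, by rw [nonsingularLift, ha]⟩

end NonsingularLift

include hQ0 hbil in
theorem nonempty_induce_neighborSet_iso_sp6PolarGraph (u : {v : Fin 8 → ZMod 2 // Q v = 1})
    {L : (Fin 6 → ZMod 2) →ₗ[ZMod 2] (Fin 8 → ZMod 2)} (hLu : ∀ c, polarForm Q u (L c) = 0)
    (hform : ∀ c d, polarForm Q (L c) (L d) = sp6Form c d)
    (hind : ∀ (a : ZMod 2) c, a • u.1 + L c = 0 → c = 0)
    (hspan : ∀ x, polarForm Q u x = 0 → ∃ (a : ZMod 2) (c : Fin 6 → ZMod 2), a • u.1 + L c = x) :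
    Nonempty ((nonsingularGraph Q).induce ((nonsingularGraph Q).neighborSet u) ≃g
      sp6PolarGraph) := by
  have hinj := nonsingularLift_injective (Q := Q) hind
  let f (c : {c : Fin 6 → ZMod 2 // c ≠ 0}) : (nonsingularGraph Q).neighborSet u :=
    ⟨⟨nonsingularLift Q u L c, apply_nonsingularLift hLu u.2 c⟩,
      fun h => c.2 (hinj ((nonsingularLift_zero hQ0).trans (congrArg Subtype.val h))).symm,
      polarForm_nonsingularLift_right hQ0 hbil hLu c⟩
  have hf : Function.Bijective f := by
    refine ⟨fun c d h => Subtype.ext (hinj (congrArg (fun v => v.1.1) h)), ?_⟩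
    rintro ⟨v, hne, hv⟩
    obtain ⟨c, hc⟩ := exists_nonsingularLift_eq hLu u.2 hspan v.2 hv
    refine ⟨⟨c, ?_⟩, Subtype.ext (Subtype.ext hc)⟩
    rintro rfl
    exact hne (Subtype.ext ((nonsingularLift_zero hQ0).symm.trans hc))
  refine ⟨(⟨Equiv.ofBijective f hf, fun {c d} => ?_⟩ : sp6PolarGraph ≃g _).symm⟩
  refine and_congr (not_congr ⟨fun h => ?_, fun h => by rw [h]⟩) ?_
  · exact hf.1 (Subtype.ext h)
  · change polarForm Q (nonsingularLift Q u L c) (nonsingularLift Q u L d) = 0 ↔ _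
    rw [polarForm_nonsingularLift hQ0 hbil hLu, hform]

end QuadraticForm

/-- For any quadratic form `Q` on `GF(2)^8` with nondegenerate
polar form, the perp-graph on the nonsingular vectors of `Q` is locally the
`Sp_6(2)` polar graph. -/
theorem stmt_7 (Q : (Fin 8 → ZMod 2) → ZMod 2)
    (hQ0 : Q 0 = 0)
    (hbil : ∀ x y z : Fin 8 → ZMod 2,
      polarForm Q (x + y) z = polarForm Q x z + polarForm Q y z)
    (hnondeg : ∀ x : Fin 8 → ZMod 2,
      (∀ y : Fin 8 → ZMod 2, polarForm Q x y = 0) → x = 0) :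
    ∀ u : {v : Fin 8 → ZMod 2 // Q v = 1},
      Nonempty
        (((nonsingularGraph Q).induce ((nonsingularGraph Q).neighborSet u)) ≃g
          sp6PolarGraph) := by
  intro u
  have hB := isAlt_polarBilin hQ0 hbil
  have hnd : (polarBilin hbil).SeparatingLeft := hnondeg
  obtain ⟨y, hy⟩ := exists_apply_eq_one hnd (x := u.1) fun h => by simpa [h, hQ0] using u.2
  obtain ⟨p, hp, hp0⟩ := exists_isSymplecticFamily_fin_succ hB hnd (u.1, y) hy 3 (by simp)
  have hu : (p 0).1 = u.1 := by rw [hp0]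
  let e := finPairsLinearEquiv (ZMod 2) 3
  refine nonempty_induce_neighborSet_iso_sp6PolarGraph hQ0 hbil u
    (L := pairCombination (ZMod 2) (Fin.tail p) ∘ₗ e.toLinearMap) (fun c => ?_) (fun c d => ?_)
    (fun a c h => ?_) (fun x hx => ?_)
  · rw [← hu]
    exact hp.apply_fst_zero_pairCombination_tail (e c)
  · rw [sp6Form_eq_sum]
    exact hp.tail.pairCombination_apply_pairCombination hB _ _
  · exact e.map_eq_zero_iff.1 (hp.eq_zero_of_smul_add_pairCombination_tail_eq_zero hB (hu ▸ h))
  · obtain ⟨a, c, hc⟩ := hp.exists_smul_add_pairCombination_tail_eq hB (by simp) (hu ▸ hx)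
    exact ⟨a, e.symm c, by simpa [hu] using hc⟩
end

section
/- Let V = Fin 4 → ZMod 3 carry the standard nondegenerate alternating bilinear form B(x,y) = x₀y₁ − x₁y₀ + x₂y₃ − x₃y₂. Then the simple graph whose vertices are the 40 projective points of V (1-dimensional subspaces, i.e. elements of Projectivization (ZMod 3) V), with distinct points [u], [v] adjacent if and only if B(u,v) ≠ 0 (a condition independent of the chosen representatives), is strongly regular with parameters (40, 27, 18, 18). -/
/-! A point is never adjacent to itself because the form is alternating, so the neighbours of `[u]`
are the points `[w]` with `B(u,w) ≠ 0`, and the common neighbours of distinct `[u]`, `[v]` are the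
points with `B(u,w) ≠ 0 ≠ B(v,w)`, whether or not `[u]` and `[v]` are adjacent. As `B` is
nondegenerate, `B(u,·)` and `B(v,·)` are linearly independent functionals, so
`w ↦ (B(u,w), B(v,w))` maps `𝔽₃⁴` onto `𝔽₃²` with all fibres of size 9: the 4 pairs with both
entries nonzero give 36 vectors, i.e. 18 points. In the same way the 2 nonzero values of `B(u,·)`
give 54 vectors, i.e. 27 points. -/

noncomputable section

/-- The standard nondegenerate alternating bilinear form
`B(x,y) = x₀y₁ − x₁y₀ + x₂y₃ − x₃y₂` on `GF(3)^4`. -/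
def sp4Form (x y : Fin 4 → ZMod 3) : ZMod 3 :=
  x 0 * y 1 - x 1 * y 0 + x 2 * y 3 - x 3 * y 2

lemma sp4Form_skew (x y : Fin 4 → ZMod 3) : sp4Form y x = -sp4Form x y := by
  unfold sp4Form; ring

/-- The graph on the 40 projective points of `GF(3)^4`: distinct points `[u]`,
`[v]` adjacent iff `B(u,v) ≠ 0` (independent of the representatives). -/
def sp4NonPerpGraph :
    SimpleGraph (Projectivization (ZMod 3) (Fin 4 → ZMod 3)) where
  Adj p q := p ≠ q ∧ sp4Form p.rep q.rep ≠ 0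
  symm := by
    constructor
    rintro p q ⟨h1, h2⟩
    refine ⟨h1.symm, ?_⟩
    rw [sp4Form_skew]
    exact neg_ne_zero.mpr h2
  loopless := by constructor; rintro p ⟨h, -⟩; exact h rfl

instance : Finite (Projectivization (ZMod 3) (Fin 4 → ZMod 3)) :=
  Quotient.finite _

instance : Fintype (Projectivization (ZMod 3) (Fin 4 → ZMod 3)) :=
  Fintype.ofFinite _

instance : DecidableRel sp4NonPerpGraph.Adj := Classical.decRel _

open Module Projectivization Function Finset
open scoped LinearAlgebra.Projectivization

theorem AddMonoidHom.card_preimage_mul_card_eq {G H : Type*} [AddGroup G] [AddGroup H]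
    [Fintype G] [Fintype H] [DecidableEq H] {f : G →+ H} (hf : Surjective f) (S : Finset H) :
    #{g | f g ∈ S} * Fintype.card H = #S * Fintype.card G := by
  have hfiber : ∀ h, #{g | f g = h} = #{g | f g = 0} := fun h =>
    card_fiber_eq_of_mem_range f (hf h) (hf 0)
  have hS : #{g | f g ∈ S} = ∑ h ∈ S, #{g | f g = h} := by
    rw [card_eq_sum_card_fiberwise (f := f) (t := S) fun g hg => by simpa using hg]
    refine sum_congr rfl fun h hh => ?_
    rw [filter_filter]
    refine congrArg card <| filter_congr fun g _ => ?_
    simp only [and_iff_right_iff_imp]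
    rintro rfl
    exact hh
  have hG : Fintype.card G = ∑ h, #{g | f g = h} := by
    rw [← card_univ, card_eq_sum_card_fiberwise (f := f) (t := univ) (by simp)]
  rw [hS, hG]
  simp only [hfiber, sum_const, card_univ, smul_eq_mul]
  ring

section Counting
variable {K V : Type*} [Field K] [AddCommGroup V] [Module K V]

theorem Projectivization.card_subtype_rep_mul (P : V → Prop) (hP0 : ¬P 0)
    (hPsmul : ∀ (c : Kˣ) (v : V), P (c • v) ↔ P v) :
    Nat.card {p : ℙ K V // P p.rep} * (Nat.card K - 1) = Nat.card {v // P v} := by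
  have hP : ∀ v (hv : v ≠ 0), P (mk K v hv).rep ↔ P v := fun v hv => by
    obtain ⟨c, hc⟩ := exists_smul_eq_mk_rep K v hv
    rw [← hc, hPsmul]
  let e : {v // P v} ≃ {p : ℙ K V // P p.rep} × Kˣ :=
    (Equiv.subtypeSubtypeEquivSubtype fun {v} hv => by rintro rfl; exact hP0 hv).symm.trans <|
      (Equiv.subtypeEquiv (nonZeroEquivProjectivizationProdUnits K V)
        fun v => (hP v.1 v.2).symm).trans Equiv.prodSubtypeFstEquivSubtypeProd
  rw [Nat.card_congr e, Nat.card_prod, Nat.card_units]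

variable {ι : Type*} [Fintype ι] [DecidableEq ι] {φ : ι → Dual K V}

theorem LinearIndependent.surjective_pi (hφ : LinearIndependent K φ) :
    Surjective (LinearMap.pi φ) := by
  rw [← LinearMap.dualMap_injective_iff, ← LinearMap.ker_eq_bot, LinearMap.ker_eq_bot']
  intro ψ hψ
  have hsum : ∑ i, ψ (Pi.single i 1) • φ i = 0 := by
    ext w
    rw [← LinearMap.congr_fun hψ w, LinearMap.dualMap_apply, LinearMap.pi_apply_eq_sum_univ]
    simp [← Pi.single_apply, Pi.single_comm, mul_comm]
  have hzero := Fintype.linearIndependent_iff.mp hφ _ hsum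
  refine LinearMap.pi_ext fun i x => ?_
  rw [← mul_one x, ← smul_eq_mul, Pi.single_smul', map_smul, hzero]
  simp

variable [Fintype K] [DecidableEq K] [Fintype V]

theorem LinearIndependent.card_forall_ne_zero_mul (hφ : LinearIndependent K φ) :
    #{w | ∀ i, φ i w ≠ 0} * Fintype.card K ^ Fintype.card ι =
      (Fintype.card K - 1) ^ Fintype.card ι * Fintype.card V := by
  have h := AddMonoidHom.card_preimage_mul_card_eq (f := (LinearMap.pi φ).toAddMonoidHom)
    hφ.surjective_pi (Fintype.piFinset fun _ => ({0}ᶜ : Finset K))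
  simpa [Fintype.card_piFinset, Fintype.mem_piFinset, card_compl] using h

theorem LinearIndependent.card_points_forall_ne_zero_mul [Nonempty ι]
    (hφ : LinearIndependent K φ) :
    Nat.card {p : ℙ K V // ∀ i, φ i p.rep ≠ 0} * (Fintype.card K - 1) *
        Fintype.card K ^ Fintype.card ι =
      (Fintype.card K - 1) ^ Fintype.card ι * Fintype.card V := by
  rw [← Nat.card_eq_fintype_card (α := K),
    card_subtype_rep_mul (fun w => ∀ i, φ i w ≠ 0) (by simp) fun c v => by simp [Units.smul_def],
    Nat.card_eq_fintype_card, Fintype.card_subtype, Nat.card_eq_fintype_card]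
  exact hφ.card_forall_ne_zero_mul

end Counting

def sp4BilinForm : LinearMap.BilinForm (ZMod 3) (Fin 4 → ZMod 3) :=
  LinearMap.mk₂ (ZMod 3) sp4Form
    (fun _ _ _ => by simp only [sp4Form, Pi.add_apply]; ring)
    (fun _ _ _ => by simp only [sp4Form, Pi.smul_apply, smul_eq_mul]; ring)
    (fun _ _ _ => by simp only [sp4Form, Pi.add_apply]; ring)
    (fun _ _ _ => by simp only [sp4Form, Pi.smul_apply, smul_eq_mul]; ring)

@[simp]
theorem sp4BilinForm_apply (x y : Fin 4 → ZMod 3) : sp4BilinForm x y = sp4Form x y := rfl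

theorem sp4Form_self (x : Fin 4 → ZMod 3) : sp4Form x x = 0 := by
  unfold sp4Form; ring

theorem sp4BilinForm_injective : Injective sp4BilinForm := by
  rw [← LinearMap.ker_eq_bot, LinearMap.ker_eq_bot']
  intro x hx
  have h := fun j => LinearMap.congr_fun hx (Pi.single j 1)
  ext i
  fin_cases i
  · simpa [sp4Form] using h 1
  · simpa [sp4Form] using h 0
  · simpa [sp4Form] using h 3
  · simpa [sp4Form] using h 2

theorem sp4NonPerpGraph_adj_iff {p q : ℙ (ZMod 3) (Fin 4 → ZMod 3)} :
    sp4NonPerpGraph.Adj p q ↔ sp4Form p.rep q.rep ≠ 0 := by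
  refine ⟨And.right, fun h => ⟨?_, h⟩⟩
  rintro rfl
  exact h (sp4Form_self _)

theorem card_forall_sp4Form_rep_ne_zero_mul {k : ℕ} [NeZero k]
    {f : Fin k → ℙ (ZMod 3) (Fin 4 → ZMod 3)} (hf : Independent f) :
    Nat.card {r : ℙ (ZMod 3) (Fin 4 → ZMod 3) // ∀ i, sp4Form (f i).rep r.rep ≠ 0} * 2 * 3 ^ k =
      2 ^ k * 81 := by
  have hφ : LinearIndependent (ZMod 3) (sp4BilinForm ∘ Projectivization.rep ∘ f) :=
    (independent_iff.mp hf).map' _ (LinearMap.ker_eq_bot.mpr sp4BilinForm_injective)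
  simpa using hφ.card_points_forall_ne_zero_mul

theorem card_projectivization_fin_four_zmod_three :
    Fintype.card (ℙ (ZMod 3) (Fin 4 → ZMod 3)) = 40 := by
  have h := Projectivization.card' (ZMod 3) (Fin 4 → ZMod 3)
  simp only [Nat.card_eq_fintype_card, Fintype.card_fun, ZMod.card, Fintype.card_fin] at h
  omega

theorem sp4NonPerpGraph_degree (p : ℙ (ZMod 3) (Fin 4 → ZMod 3)) :
    sp4NonPerpGraph.degree p = 27 := by
  have hp : Independent ![p] := independent_iff.mpr <|
    linearIndependent_unique_iff.mpr (by simpa using p.rep_nonzero)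
  have hcount := card_forall_sp4Form_rep_ne_zero_mul hp
  have hneighbors : Nat.card (sp4NonPerpGraph.neighborSet p) =
      Nat.card {r : ℙ (ZMod 3) (Fin 4 → ZMod 3) // ∀ i, sp4Form (![p] i).rep r.rep ≠ 0} :=
    Nat.card_congr <| Equiv.subtypeEquivRight fun r => by
      simp [sp4NonPerpGraph_adj_iff]
  rw [← SimpleGraph.card_neighborSet_eq_degree, ← Nat.card_eq_fintype_card]
  omega

theorem sp4NonPerpGraph_card_commonNeighbors {p q : ℙ (ZMod 3) (Fin 4 → ZMod 3)} (hpq : p ≠ q) :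
    Fintype.card (sp4NonPerpGraph.commonNeighbors p q) = 18 := by
  have hcount := card_forall_sp4Form_rep_ne_zero_mul ((independent_pair_iff_ne p q).mpr hpq)
  have hcommon : Nat.card (sp4NonPerpGraph.commonNeighbors p q) =
      Nat.card {r : ℙ (ZMod 3) (Fin 4 → ZMod 3) // ∀ i, sp4Form (![p, q] i).rep r.rep ≠ 0} :=
    Nat.card_congr <| Equiv.subtypeEquivRight fun r => by
      simp [SimpleGraph.mem_commonNeighbors, sp4NonPerpGraph_adj_iff, Fin.forall_fin_two]
  rw [← Nat.card_eq_fintype_card]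
  omega

/-- The graph on the 40 projective points of the symplectic
`GF(3)^4`-space, distinct points adjacent iff they are non-perpendicular, is
strongly regular with parameters `(40, 27, 18, 18)`. -/
theorem stmt_10 : sp4NonPerpGraph.IsSRGWith 40 27 18 18 :=
  ⟨card_projectivization_fin_four_zmod_three, sp4NonPerpGraph_degree,
    fun _ _ h => sp4NonPerpGraph_card_commonNeighbors h.ne,
    fun _ _ hpq _ => sp4NonPerpGraph_card_commonNeighbors hpq⟩

end
end
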